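/- Let (X, Y, R) and (X′, Y′, R′) be polarities and α : X → X′, β : Y → Y′ any pair of functions. Then: (1) α, β satisfy conditions (1_R) and (2_R) if and only if β⁻¹(ρ_{R′} A) = ρ_R(α⁻¹ A) for every stable A ⊆ X′; (2) α, β satisfy conditions (1_R) and (3_R) if and only if α⁻¹(λ_{R′} B) = λ_R(β⁻¹ B) for every stable B ⊆ Y′. -/

import Mathlib

/-- The right polar `ρ_R A = {y ∈ Y : ∀ x ∈ A, x R y}`. -/
def rpolar {X Y : Type*} (R : X → Y → Prop) (A : Set X) : Set Y := {y | ∀ x ∈ A, R x y}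

/-- The left polar `λ_R B = {x ∈ X : ∀ y ∈ B, x R y}`. -/
def lpolar {X Y : Type*} (R : X → Y → Prop) (B : Set Y) : Set X := {x | ∀ y ∈ B, R x y}

/-- `A ⊆ X` is stable if `A = λ_R (ρ_R A)`. -/
def StableX {X Y : Type*} (R : X → Y → Prop) (A : Set X) : Prop := A = lpolar R (rpolar R A)

/-- `B ⊆ Y` is stable if `B = ρ_R (λ_R B)`. -/
def StableY {X Y : Type*} (R : X → Y → Prop) (B : Set Y) : Prop := B = rpolar R (lpolar R B)

/-- The quasi-order `≤₁` on `X`. -/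
def le1 {X Y : Type*} (R : X → Y → Prop) (x x' : X) : Prop := rpolar R {x} ⊆ rpolar R {x'}

/-- The quasi-order `≤₂` on `Y`. -/
def le2 {X Y : Type*} (R : X → Y → Prop) (y y' : Y) : Prop := lpolar R {y} ⊆ lpolar R {y'}

/-- The operator `f_S` induced on stable sets by `S ⊆ Xⁿ × Y`. -/
def fS {X Y : Type*} {n : ℕ} (R : X → Y → Prop) (S : (Fin n → X) → Y → Prop)
    (A : Fin n → Set X) : Set X :=
  lpolar R {y | ∀ xs : Fin n → X, (∀ i, xs i ∈ A i) → S xs y}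

/-- The dual operator `g_T` induced on stable sets by `T ⊆ X × Yᵐ`. -/
def gT {X Y : Type*} {m : ℕ} (R : X → Y → Prop) (T : X → (Fin m → Y) → Prop)
    (A : Fin m → Set X) : Set X :=
  {x | ∀ ys : Fin m → Y, (∀ i, ys i ∈ rpolar R (A i)) → T x ys}

/-- All sections of `S ⊆ Xⁿ × Y` are stable. -/
def SSectionsStable {X Y : Type*} {n : ℕ} (R : X → Y → Prop)
    (S : (Fin n → X) → Y → Prop) : Prop :=
  (∀ xs : Fin n → X, StableY R {y | S xs y}) ∧
  (∀ (xs : Fin n → X) (i : Fin n) (y : Y), StableX R {x' | S (Function.update xs i x') y})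

/-- All sections of `T ⊆ X × Yᵐ` are stable. -/
def TSectionsStable {X Y : Type*} {m : ℕ} (R : X → Y → Prop)
    (T : X → (Fin m → Y) → Prop) : Prop :=
  (∀ ys : Fin m → Y, StableX R {x | T x ys}) ∧
  (∀ (x : X) (ys : Fin m → Y) (i : Fin m), StableY R {y' | T x (Function.update ys i y')})

/-!
Both parts reduce to a pointwise statement: (1_R) and (2_R) together say exactly that
`x' R' β y ↔ ∀ x, x' ≤₁' α x → x R y`, which is the commutation `β⁻¹ ρ' A = ρ (α⁻¹ A)` for
the principal stable set `A = λ' ρ' {x'} = {a | x' ≤₁' a}`. Since every stable set is an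
up-set for `≤₁'`, the pointwise statement gives commutation for all stable sets. Part (2) is
part (1) for the converse polarities `(Y, X, flip R)` and `(Y', X', flip R')`.
-/

section Polarity

variable {X Y : Type*} (R : X → Y → Prop)

lemma le1_iff_mem_lpolar_rpolar_singleton {x x' : X} :
    le1 R x x' ↔ x' ∈ lpolar R (rpolar R {x}) :=
  ⟨fun h y hy => h hy x' rfl, fun h y hy => by rintro _ rfl; exact h y hy⟩

lemma le1_refl (x : X) : le1 R x x := subset_rfl

lemma rpolar_lpolar_rpolar (A : Set X) : rpolar R (lpolar R (rpolar R A)) = rpolar R A :=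
  Set.Subset.antisymm (fun _ hy x hx => hy x fun _ hy' => hy' x hx)
    (fun y hy _ hx => hx y hy)

lemma stableX_lpolar (B : Set Y) : StableX R (lpolar R B) :=
  Set.Subset.antisymm (fun _ hx _ hy => hy _ hx)
    (fun _ hx y hy => hx y fun _ hx' => hx' y hy)

variable {R}

lemma StableX.mem_of_le1 {A : Set X} (hA : StableX R A) {x x' : X} (hx : x ∈ A)
    (hle : le1 R x x') : x' ∈ A := by
  rw [hA]
  exact fun y hy => hle (fun _ hx' => hx' ▸ hy x hx) x' rfl

end Polarity

section Morphism

variable {X Y X' Y' : Type*} (R : X → Y → Prop) (R' : X' → Y' → Prop) (α : X → X') (β : Y → Y')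

lemma back_and_forth_iff_forall_rel_iff :
    ((∀ x y, R' (α x) (β y) → R x y) ∧
      (∀ x' y, (∀ x, le1 R' x' (α x) → R x y) → R' x' (β y))) ↔
      ∀ x' y, R' x' (β y) ↔ ∀ x, le1 R' x' (α x) → R x y := by
  refine ⟨fun ⟨h1, h2⟩ x' y => ⟨fun h x hle => h1 x y ?_, h2 x' y⟩,
    fun h => ⟨fun x y hxy => (h (α x) y).1 hxy x (le1_refl R' _), fun x' y => (h x' y).2⟩⟩
  exact (le1_iff_mem_lpolar_rpolar_singleton R').1 hle (β y) fun _ hx => hx ▸ h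

lemma forall_stableX_preimage_rpolar_eq_iff :
    (∀ A, StableX R' A → β ⁻¹' rpolar R' A = rpolar R (α ⁻¹' A)) ↔
      ∀ x' y, R' x' (β y) ↔ ∀ x, le1 R' x' (α x) → R x y := by
  constructor
  · intro h x' y
    have hprincipal := h _ (stableX_lpolar R' (rpolar R' {x'}))
    rw [rpolar_lpolar_rpolar] at hprincipal
    simpa [le1_iff_mem_lpolar_rpolar_singleton, rpolar] using Set.ext_iff.1 hprincipal y
  · intro h A hA
    refine Set.Subset.antisymm (fun y hy x hx => (h (α x) y).1 (hy _ hx) x (le1_refl R' _)) ?_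
    exact fun y hy x' hx' => (h x' y).2 fun x hle => hy x (hA.mem_of_le1 hx' hle)

theorem back_and_forth_iff_forall_stableX_preimage_rpolar_eq :
    ((∀ x y, R' (α x) (β y) → R x y) ∧
      (∀ x' y, (∀ x, le1 R' x' (α x) → R x y) → R' x' (β y))) ↔
      ∀ A, StableX R' A → β ⁻¹' rpolar R' A = rpolar R (α ⁻¹' A) :=
  (back_and_forth_iff_forall_rel_iff R R' α β).trans
    (forall_stableX_preimage_rpolar_eq_iff R R' α β).symm

end Morphism

/-- Characterisation of the back-and-forth conditions (1_R), (2_R), (3_R) in terms of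
commutation of preimages with the polar operations on stable sets. -/
theorem stmt6 {X Y X' Y' : Type*} (R : X → Y → Prop) (R' : X' → Y' → Prop)
    (α : X → X') (β : Y → Y') :
    (((∀ (x : X) (y : Y), R' (α x) (β y) → R x y) ∧
      (∀ (x' : X') (y : Y), (∀ x : X, le1 R' x' (α x) → R x y) → R' x' (β y))) ↔
      (∀ A : Set X', StableX R' A → β ⁻¹' (rpolar R' A) = rpolar R (α ⁻¹' A))) ∧
    (((∀ (x : X) (y : Y), R' (α x) (β y) → R x y) ∧
      (∀ (x : X) (y' : Y'), (∀ y : Y, le2 R' y' (β y) → R x y) → R' (α x) y')) ↔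
      (∀ B : Set Y', StableY R' B → α ⁻¹' (lpolar R' B) = lpolar R (β ⁻¹' B))) :=
  ⟨back_and_forth_iff_forall_stableX_preimage_rpolar_eq R R' α β,
    (and_congr forall_comm forall_comm).trans
      (back_and_forth_iff_forall_stableX_preimage_rpolar_eq (flip R) (flip R') β α)⟩
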